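/- Let k ≥ 1 and ξ ≥ 1 be integers, and let G_ξ be the graph obtained from ξ disjoint copies of D_{k+1} by identifying all copies of the vertex u with one another and all copies of the vertex v with one another, the copies being otherwise pairwise disjoint. Let γ_ξ be the coloring of G_ξ whose restriction to each copy of D_{k+1} is γ. Then γ_ξ is a proper 3-coloring of G_ξ, and it is the unique proper 3-coloring σ of G_ξ with σ(u) = 3 and σ(v) = 1. -/

import Mathlib

/-- Vertices of the graph `G_ξ`, obtained from `ξ` disjoint copies of `D_K` by
identifying all copies of `u` and all copies of `v`:  `u` and `v` are shared, and each
of the remaining vertices of `D_K` carries a copy index `c : Fin ξ`.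
(`x c i` models the vertex `x_{i+1}` of copy `c`, and `a c i`, `b c i` model the
vertices `v_{1,i+1}`, `v_{2,i+1}` of copy `c`.) -/
inductive GVert (K ξ : ℕ) : Type
  | u : GVert K ξ
  | v : GVert K ξ
  | z : Fin ξ → GVert K ξ
  | x : Fin ξ → Fin K → GVert K ξ
  | a : Fin ξ → Fin (K - 1) → GVert K ξ
  | b : Fin ξ → Fin (K - 1) → GVert K ξ

/-- The edges of `G_ξ`: inside each copy `c`, exactly the edges of `D_K`
(`uz`, `ux_K`, `vx_K`, `zx_1`, `z v_{1,i}`, and the triangles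
`{x_i, v_{1,i}, v_{2,i}}`, `{x_{i+1}, v_{1,i}, v_{2,i}}`). -/
def GRel (K ξ : ℕ) : GVert K ξ → GVert K ξ → Prop
  | .u, .z _ => True
  | .u, .x _ i => (i : ℕ) = K - 1
  | .v, .x _ i => (i : ℕ) = K - 1
  | .z c, .x c' i => c = c' ∧ (i : ℕ) = 0
  | .z c, .a c' _ => c = c'
  | .x c j, .a c' i => c = c' ∧ ((j : ℕ) = (i : ℕ) ∨ (j : ℕ) = (i : ℕ) + 1)
  | .x c j, .b c' i => c = c' ∧ ((j : ℕ) = (i : ℕ) ∨ (j : ℕ) = (i : ℕ) + 1)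
  | .a c i, .b c' j => c = c' ∧ (i : ℕ) = (j : ℕ)
  | _, _ => False

/-- The graph `G_ξ` built from `ξ` copies of `D_K` glued along `u` and `v`. -/
def Ggraph (K ξ : ℕ) : SimpleGraph (GVert K ξ) := SimpleGraph.fromRel (GRel K ξ)

/-- The coloring `γ_ξ` of `G_ξ`, restricting on each copy of `D_K` to the coloring `γ`
(colors `1, 2, 3` are modelled as `0, 1, 2 : Fin 3`): `γ(u) = 3`, `γ(v) = 1`,
`γ(z) = 1`, `γ(xᵢ) = 2`, `γ(v_{1,i}) = 3`, `γ(v_{2,i}) = 1`. -/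
def γG (K ξ : ℕ) : GVert K ξ → Fin 3
  | .u => 2
  | .v => 0
  | .z _ => 0
  | .x _ _ => 1
  | .a _ _ => 2
  | .b _ _ => 0

/-!
Two vertices `x_i`, `x_{i+1}` that each form a triangle with the edge `v_{1,i} v_{2,i}` must
receive the same color in any proper 3-coloring, since both avoid the two distinct colors of
that edge. Hence all `x_i` of a copy share the color of `x_{k+1}`, which is forced to be `2`
by its neighbours `u` and `v`. The colors of `z`, `v_{1,i}` and `v_{2,i}` are then forced in
turn by `u` and `x_1`, by `z` and `x_i`, and by `v_{1,i}` and `x_i`.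
-/

theorem eq_of_ne_of_ne_of_card_eq_three {α : Type*} [Fintype α] (hα : Fintype.card α = 3)
    {a b p q : α} (hab : a ≠ b) (hpa : p ≠ a) (hpb : p ≠ b) (hqa : q ≠ a) (hqb : q ≠ b) :
    p = q := by
  classical
  by_contra hpq
  have hcard : ({a, b, p, q} : Finset α).card = 4 := by
    simp [Finset.card_insert_of_notMem, hab, hpa.symm, hpb.symm, hqa.symm, hqb.symm, hpq]
  have := Finset.card_le_univ ({a, b, p, q} : Finset α)
  omega

theorem eq_of_ne_of_ne_fin_three {a b p q : Fin 3} (hab : a ≠ b) (hpa : p ≠ a) (hpb : p ≠ b)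
    (hqa : q ≠ a) (hqb : q ≠ b) : p = q :=
  eq_of_ne_of_ne_of_card_eq_three (Fintype.card_fin 3) hab hpa hpb hqa hqb

section

variable {K ξ : ℕ}

theorem GRel.ne {p q : GVert K ξ} (h : GRel K ξ p q) : p ≠ q := by
  rintro rfl
  cases p <;> simp [GRel] at h

theorem Ggraph_adj_of_GRel {p q : GVert K ξ} (h : GRel K ξ p q) : (Ggraph K ξ).Adj p q :=
  (SimpleGraph.fromRel_adj _ _ _).2 ⟨h.ne, Or.inl h⟩

theorem γG_ne_of_adj {p q : GVert K ξ} (h : (Ggraph K ξ).Adj p q) : γG K ξ p ≠ γG K ξ q := by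
  rw [Ggraph, SimpleGraph.fromRel_adj] at h
  obtain ⟨-, h | h⟩ := h <;> cases p <;> cases q <;> simp [GRel, γG] at h ⊢

end

section

variable {k ξ : ℕ} {σ : GVert (k + 1) ξ → Fin 3}
  (hσ : ∀ p q, (Ggraph (k + 1) ξ).Adj p q → σ p ≠ σ q)
include hσ

theorem ne_of_GRel {p q : GVert (k + 1) ξ} (h : GRel (k + 1) ξ p q) : σ p ≠ σ q :=
  hσ p q (Ggraph_adj_of_GRel h)

theorem color_x_castSucc_eq_succ (c : Fin ξ) (i : Fin k) :
    σ (.x c i.castSucc) = σ (.x c i.succ) :=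
  eq_of_ne_of_ne_fin_three (a := σ (.a c i)) (b := σ (.b c i))
    (ne_of_GRel hσ ⟨rfl, rfl⟩)
    (ne_of_GRel hσ ⟨rfl, Or.inl rfl⟩) (ne_of_GRel hσ ⟨rfl, Or.inl rfl⟩)
    (ne_of_GRel hσ ⟨rfl, Or.inr rfl⟩) (ne_of_GRel hσ ⟨rfl, Or.inr rfl⟩)

variable (hu : σ .u = 2) (hv : σ .v = 0)
include hu hv

theorem color_x (c : Fin ξ) (i : Fin (k + 1)) : σ (.x c i) = 1 := by
  induction i using Fin.reverseInduction with
  | last =>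
    have hux := ne_of_GRel hσ (p := .u) (q := .x c (Fin.last k)) (by simp [GRel])
    have hvx := ne_of_GRel hσ (p := .v) (q := .x c (Fin.last k)) (by simp [GRel])
    rw [hu] at hux
    rw [hv] at hvx
    exact eq_of_ne_of_ne_fin_three (by decide) hux.symm hvx.symm (by decide) (by decide)
  | cast i ih => rw [color_x_castSucc_eq_succ hσ, ih]

theorem color_z (c : Fin ξ) : σ (.z c) = 0 := by
  have huz := ne_of_GRel hσ (p := .u) (q := .z c) trivial
  have hzx := ne_of_GRel hσ (p := .z c) (q := .x c 0) ⟨rfl, rfl⟩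
  rw [hu] at huz
  rw [color_x hσ hu hv] at hzx
  exact eq_of_ne_of_ne_fin_three (by decide) huz.symm hzx (by decide) (by decide)

theorem color_a (c : Fin ξ) (i : Fin k) : σ (.a c i) = 2 := by
  have hza := ne_of_GRel hσ (p := .z c) (q := .a c i) rfl
  have hxa := ne_of_GRel hσ (p := .x c i.castSucc) (q := .a c i) ⟨rfl, Or.inl rfl⟩
  rw [color_z hσ hu hv] at hza
  rw [color_x hσ hu hv] at hxa
  exact eq_of_ne_of_ne_fin_three (by decide) hza.symm hxa.symm (by decide) (by decide)

theorem color_b (c : Fin ξ) (i : Fin k) : σ (.b c i) = 0 := by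
  have hab := ne_of_GRel hσ (p := .a c i) (q := .b c i) ⟨rfl, rfl⟩
  have hxb := ne_of_GRel hσ (p := .x c i.castSucc) (q := .b c i) ⟨rfl, Or.inl rfl⟩
  rw [color_a hσ hu hv] at hab
  rw [color_x hσ hu hv] at hxb
  exact eq_of_ne_of_ne_fin_three (by decide) hab.symm hxb.symm (by decide) (by decide)

end

theorem stmt11_general (k ξ : ℕ) :
    (∀ p q, (Ggraph (k + 1) ξ).Adj p q → γG (k + 1) ξ p ≠ γG (k + 1) ξ q) ∧
    (∀ σ : GVert (k + 1) ξ → Fin 3,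
      (∀ p q, (Ggraph (k + 1) ξ).Adj p q → σ p ≠ σ q) →
      σ .u = 2 → σ .v = 0 → σ = γG (k + 1) ξ) := by
  refine ⟨fun _ _ => γG_ne_of_adj, fun σ hσ hu hv => funext fun p => ?_⟩
  cases p with
  | u => exact hu
  | v => exact hv
  | z c => exact color_z hσ hu hv c
  | x c i => exact color_x hσ hu hv c i
  | a c i => exact color_a hσ hu hv c i
  | b c i => exact color_b hσ hu hv c i

/-- For integers `k ≥ 1` and `ξ ≥ 1`, the coloring `γ_ξ` is a proper 3-coloring of the
graph `G_ξ` (built from `ξ` copies of `D_{k+1}`), and it is the unique proper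
3-coloring `σ` of `G_ξ` with `σ(u) = 3` and `σ(v) = 1` (i.e. `2` and `0 : Fin 3`). -/
theorem stmt11 (k ξ : ℕ) (hk : 1 ≤ k) (hξ : 1 ≤ ξ) :
    (∀ p q, (Ggraph (k + 1) ξ).Adj p q → γG (k + 1) ξ p ≠ γG (k + 1) ξ q) ∧
    (∀ σ : GVert (k + 1) ξ → Fin 3,
      (∀ p q, (Ggraph (k + 1) ξ).Adj p q → σ p ≠ σ q) →
      σ .u = 2 → σ .v = 0 → σ = γG (k + 1) ξ) :=
  stmt11_general k ξ
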